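/- arXiv:2307.14537 — 3 statements merged into one kernel-verified Lean document; each statement's English description precedes it below -/
import Mathlib

section
/- Let p, v, c be points in EuclideanSpace ℝ (Fin 3) with c = v + t • (v - p) for some real t > 0 (i.e., the centroid c lies directly behind v from the perspective of p). Let W > 0 and we > 0 be real numbers, let x ∈ (0, 1), set s := v + x • (p - v) and c' := (W + we * x)⁻¹ • (W • c + (we * x) • ((1/2 : ℝ) • (s + v))). Then there exists a real t' > 0 with c' = s + t' • (v - p). (Key step in the paper's Theorem 4.10: if the pending-subtree centroid lies directly behind v, then the centroid of the pending subtree at any edge subdivision s_x lies directly behind s_x, so every edge subdivision also has node imbalance 0 for the statistics 𝒜 and ℳ.) -/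
/-!
Relative to the subdivision point `s = v + x • (p - v)`, both ingredients of `c'` lie on the
open ray from `s` in direction `v - p`: the old centroid is `c = s + (t + x) • (v - p)` and the
midpoint of the new edge piece `[s, v]` is `s + (x / 2) • (v - p)`. A combination of two points
of that ray with positive weights is again on it.
-/

section OpenRay

variable {𝕜 E : Type*} [Field 𝕜] [AddCommGroup E] [Module 𝕜 E]

lemma add_smul_sub_eq_subdivision_add_smul (p v : E) (t x : 𝕜) :
    v + t • (v - p) = (v + x • (p - v)) + (t + x) • (v - p) := by
  module

lemma half_smul_subdivision_add_eq [CharZero 𝕜] (p v : E) (x : 𝕜) :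
    (1 / 2 : 𝕜) • ((v + x • (p - v)) + v) = (v + x • (p - v)) + (x / 2) • (v - p) := by
  module

lemma inv_smul_weighted_add_on_ray (s d : E) (a b W w : 𝕜) (hWw : W + w ≠ 0) :
    (W + w)⁻¹ • (W • (s + a • d) + w • (s + b • d)) = s + ((W + w)⁻¹ * (W * a + w * b)) • d := by
  match_scalars <;> field_simp

end OpenRay

theorem subdivision_centroid_directly_behind
    (p v c : EuclideanSpace ℝ (Fin 3)) (t : ℝ) (ht : t > 0)
    (hc : c = v + t • (v - p))
    (W we : ℝ) (hW : W > 0) (hwe : we > 0)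
    (x : ℝ) (hx : x ∈ Set.Ioo (0 : ℝ) 1)
    (s : EuclideanSpace ℝ (Fin 3)) (hs : s = v + x • (p - v))
    (c' : EuclideanSpace ℝ (Fin 3))
    (hc' : c' = (W + we * x)⁻¹ • (W • c + (we * x) • ((1/2 : ℝ) • (s + v)))) :
    ∃ t' : ℝ, t' > 0 ∧ c' = s + t' • (v - p) := by
  obtain ⟨hx0, -⟩ := hx
  have hc_ray : c = s + (t + x) • (v - p) := by
    rw [hc, hs, add_smul_sub_eq_subdivision_add_smul p v t x]
  have hmid_ray : (1 / 2 : ℝ) • (s + v) = s + (x / 2) • (v - p) := by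
    rw [hs, half_smul_subdivision_add_eq]
  have hweight : W + we * x ≠ 0 := by positivity
  refine ⟨(W + we * x)⁻¹ * (W * (t + x) + we * x * (x / 2)), by positivity, ?_⟩
  rw [hc', hc_ray, hmid_ray, inv_smul_weighted_add_on_ray _ _ _ _ _ _ hweight]
end

section
/- Let u, v, c be points in EuclideanSpace ℝ (Fin 3) with u ≠ v and dist c v < dist u v, and let λ ∈ [0, 1]. Set z := λ • c + (1 - λ) • ((1/2 : ℝ) • (u + v)). Then the real inner product ⟪z - u, v - u⟫ is strictly positive; in particular InnerProductGeometry.angle (z - u) (v - u) < π / 2. (Claim from the proof of the paper's Theorem 4.11, sensitivity to linearity: if the subdivision point u is farther from v than the subtree centroid c is, then the centroid of the subtree pending at u, which lies between c and the midpoint of u and v, makes an acute centroid angle, i.e., 𝒜(u) < π/2.) -/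
/-!
Every point `x` of the open ball about `v` through `u` sees the segment `[u, v]` at `u` under an
acute angle: by the law of cosines `2 ⟪x - u, v - u⟫ = ‖x - u‖² + ‖v - u‖² - ‖x - v‖² > 0`.
Both `c` and the midpoint of `u` and `v` lie in that ball, hence so does their convex combination `z`.
-/

open InnerProductGeometry

variable {V : Type*} [NormedAddCommGroup V] [InnerProductSpace ℝ V]

theorem InnerProductGeometry.angle_lt_pi_div_two_of_inner_pos {x y : V} (h : 0 < inner ℝ x y) :
    angle x y < Real.pi / 2 := by
  have hx : x ≠ 0 := by rintro rfl; simp at h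
  have hy : y ≠ 0 := by rintro rfl; simp at h
  rw [angle, Real.arccos_lt_pi_div_two]
  exact div_pos h (mul_pos (norm_pos_iff.2 hx) (norm_pos_iff.2 hy))

theorem inner_sub_pos_of_dist_lt {x u v : V} (h : dist x v < dist u v) :
    0 < inner ℝ (x - u) (v - u) := by
  have hcos := norm_sub_sq_real (x - u) (v - u)
  rw [sub_sub_sub_cancel_right] at hcos
  rw [dist_eq_norm, dist_eq_norm, ← norm_neg (u - v), neg_sub] at h
  nlinarith [norm_nonneg (x - v), sq_nonneg ‖x - u‖]

theorem half_smul_add_mem_ball {u v : V} (huv : u ≠ v) :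
    (1 / 2 : ℝ) • (u + v) ∈ Metric.ball v (dist u v) := by
  rw [one_div, ← invOf_eq_inv, ← midpoint_eq_smul_add, Metric.mem_ball,
    dist_midpoint_right, Real.norm_two]
  linarith [dist_pos.2 huv]

theorem subdivision_centroid_acute_angle
    (u v c : EuclideanSpace ℝ (Fin 3)) (huv : u ≠ v)
    (hcv : dist c v < dist u v) (l : ℝ) (hl : l ∈ Set.Icc (0 : ℝ) 1)
    (z : EuclideanSpace ℝ (Fin 3))
    (hz : z = l • c + (1 - l) • ((1/2 : ℝ) • (u + v))) :
    (0 : ℝ) < inner ℝ (z - u) (v - u) ∧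
      InnerProductGeometry.angle (z - u) (v - u) < Real.pi / 2 := by
  have hzball : z ∈ Metric.ball v (dist u v) := by
    rw [hz]
    exact convex_ball v (dist u v) hcv (half_smul_add_mem_ball huv) hl.1 (by linarith [hl.2])
      (by ring)
  have hinner := inner_sub_pos_of_dist_lt hzball
  exact ⟨hinner, angle_lt_pi_div_two_of_inner_pos hinner⟩
end

section
/- Let W and L be real numbers with W > 0 and L > Real.sqrt (1 / W + 1) + 1. Then for every x ∈ [0, 1], (x^2 / 2 + W * L^2 / 2) / (x + W * L) > 1. (Claim from the paper's analysis of maximal trees: if the pending edge length L exceeds √(1/W + 1) + 1, then the third coordinate of the pending-subtree centroid at every edge subdivision exceeds 1, so every edge subdivision attains the maximal centroid angle π and the edge imbalance is maximal for 𝒜 and ℳ.) -/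
/-! Clearing the denominator, the claim is `x (2 - x) < W L (L - 2) = W ((L - 1)² - 1)`.
The left side is at most `1`, and the bound on `L` says exactly that the right side exceeds `1`. -/

lemma one_lt_mul_sq_sub_one_of_sqrt_lt {c t : ℝ} (hc : 0 < c) (ht : Real.sqrt (1 / c + 1) < t) :
    1 < c * (t ^ 2 - 1) := by
  have ht_pos : 0 < t := (Real.sqrt_nonneg _).trans_lt ht
  have hsq : 1 / c + 1 < t ^ 2 := (Real.sqrt_lt' ht_pos).mp ht
  exact (div_lt_iff₀' hc).mp (by linarith)

theorem centroid_height_exceeds_one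
    (W L : ℝ) (hW : W > 0) (hL : L > Real.sqrt (1 / W + 1) + 1) :
    ∀ x ∈ Set.Icc (0 : ℝ) 1, (x^2 / 2 + W * L^2 / 2) / (x + W * L) > 1 := by
  rintro x ⟨hx0, -⟩
  have hL1 : 1 < L := by linarith [Real.sqrt_nonneg (1 / W + 1)]
  have hWL : 1 < W * ((L - 1) ^ 2 - 1) := one_lt_mul_sq_sub_one_of_sqrt_lt hW (by linarith)
  have hden : 0 < x + W * L := by positivity
  rw [gt_iff_lt, lt_div_iff₀ hden]
  linarith [sq_nonneg (x - 1)]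
end
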